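/- arXiv:2509.23405 — 5 statements merged into one kernel-verified Lean document; each statement's English description precedes it below -/
import Mathlib

section
/- Evidence lower bound via discrete-time Markov chains: let S be a finite set, let X be a discrete-time Markov chain on S with transition matrices Q_k, and define p(x) = P(X_N = x). Fix x_0 ∈ S and let Y^{x_0} be any discrete-time Markov chain on S with transition matrices R_k(·,·; x_0) satisfying (1) Y^{x_0}_0 has the same distribution as X_0 and (2) P(Y^{x_0}_N = x_0) = 1. Then, writing r_k(x; x_0) = P(Y^{x_0}_k = x), it holds that log p(x_0) ≥ − Σ_{k=0}^{N-1} E_{x_k ~ r_k(·; x_0)}[ Σ_{y ∈ S} R_k(y, x_k; x_0) log( R_k(y, x_k; x_0) / Q_k(y, x_k) ) ]. -/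
open Finset

/-- The time-`k` marginal `P(X_k = x)` of the discrete-time Markov chain with initial
distribution `μ` and one-step transition matrices `Q_k(y, x) = P(X_{k+1} = y | X_k = x)`. -/
noncomputable def chainDist {S : Type*} [Fintype S] (μ : S → ℝ) (Q : ℕ → S → S → ℝ) :
    ℕ → S → ℝ
  | 0 => μ
  | k + 1 => fun x => ∑ y, Q k x y * chainDist μ Q k y


lemma chainDist_nonneg {S : Type*} [Fintype S] (μ : S → ℝ) (P : ℕ → S → S → ℝ)
    (hμ : ∀ x, 0 ≤ μ x) (hP : ∀ k x y, 0 ≤ P k y x) :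
    ∀ k x, 0 ≤ chainDist μ P k x := by
  intro k
  induction k with
  | zero => exact hμ
  | succ k ih =>
    intro x
    exact Finset.sum_nonneg fun y _ => mul_nonneg (hP k y x) (ih y)

lemma chainDist_sum_one {S : Type*} [Fintype S] (μ : S → ℝ) (P : ℕ → S → S → ℝ)
    (hμ1 : ∑ x, μ x = 1) (hP1 : ∀ k x, ∑ y, P k y x = 1) :
    ∀ k, ∑ x, chainDist μ P k x = 1 := by
  intro k
  induction k with
  | zero => exact hμ1
  | succ k ih =>
    calc ∑ x, chainDist μ P (k+1) x
        = ∑ x, ∑ y, P k x y * chainDist μ P k y := rfl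
      _ = ∑ y, (∑ x, P k x y) * chainDist μ P k y := by
          rw [Finset.sum_comm]
          exact Finset.sum_congr rfl fun y _ => (Finset.sum_mul _ _ _).symm
      _ = ∑ y, chainDist μ P k y := by
          exact Finset.sum_congr rfl fun y _ => by rw [hP1 k y, one_mul]
      _ = 1 := ih

lemma log_sum_ineq {ι : Type*} (s : Finset ι) (a b : ι → ℝ)
    (ha : ∀ i ∈ s, 0 ≤ a i) (hb : ∀ i ∈ s, 0 ≤ b i)
    (hab : ∀ i ∈ s, 0 < a i → 0 < b i) :
    (∑ i ∈ s, a i) * Real.log ((∑ i ∈ s, a i) / (∑ i ∈ s, b i))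
      ≤ ∑ i ∈ s, a i * Real.log (a i / b i) := by
  set A := ∑ i ∈ s, a i with hA
  set B := ∑ i ∈ s, b i with hB
  have hA0 : 0 ≤ A := Finset.sum_nonneg ha
  rcases eq_or_lt_of_le hA0 with h0 | hApos
  · -- A = 0 : every a i = 0
    have hz : ∀ i ∈ s, a i = 0 :=
      (Finset.sum_eq_zero_iff_of_nonneg ha).mp h0.symm
    have : ∑ i ∈ s, a i * Real.log (a i / b i) = 0 :=
      Finset.sum_eq_zero fun i hi => by rw [hz i hi, zero_mul]
    rw [this, ← h0, zero_mul]
  · set t := s.filter (fun i => 0 < a i) with ht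
    have hts : t ⊆ s := Finset.filter_subset _ _
    have hAt : ∑ i ∈ t, a i = A := by
      rw [hA]
      apply Finset.sum_filter_of_ne
      intro i hi hne
      exact lt_of_le_of_ne (ha i hi) (Ne.symm hne)
    have hRt : ∑ i ∈ t, a i * Real.log (a i / b i)
        = ∑ i ∈ s, a i * Real.log (a i / b i) := by
      apply Finset.sum_filter_of_ne
      intro i hi hne
      have : a i ≠ 0 := fun h => hne (by rw [h, zero_mul])
      exact lt_of_le_of_ne (ha i hi) (Ne.symm this)
    obtain ⟨i0, hi0s, hi0⟩ : ∃ i ∈ s, 0 < a i := by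
      by_contra hcon
      push_neg at hcon
      have : A ≤ 0 := Finset.sum_nonpos hcon
      linarith
    have hi0t : i0 ∈ t := Finset.mem_filter.mpr ⟨hi0s, hi0⟩
    set B' := ∑ i ∈ t, b i with hB'
    have hB'pos : 0 < B' := by
      apply Finset.sum_pos
      · intro i hi
        exact hab i (hts hi) (Finset.mem_filter.mp hi).2
      · exact ⟨i0, hi0t⟩
    have hB'B : B' ≤ B :=
      Finset.sum_le_sum_of_subset_of_nonneg hts (fun i hi _ => hb i hi)
    have hBpos : 0 < B := lt_of_lt_of_le hB'pos hB'B
    -- key termwise inequality on t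
    have key : ∀ i ∈ t,
        a i * Real.log (A / B) + (a i - (A / B) * b i)
          ≤ a i * Real.log (a i / b i) := by
      intro i hi
      have hai : 0 < a i := (Finset.mem_filter.mp hi).2
      have hbi : 0 < b i := hab i (hts hi) hai
      have hx : (0:ℝ) < (A / B) / (a i / b i) := by positivity
      have h1 := Real.log_le_sub_one_of_pos hx
      rw [Real.log_div (by positivity : (0:ℝ) < A / B).ne'
        (by positivity : (0:ℝ) < a i / b i).ne'] at h1
      have h2 : a i * ((A / B) / (a i / b i)) = (A / B) * b i := by
        field_simp
      have h3 := mul_le_mul_of_nonneg_left h1 hai.le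
      nlinarith [h3, h2]
    calc A * Real.log (A / B)
        ≤ A * Real.log (A / B) + (A - (A / B) * B') := by
          have : (A / B) * B' ≤ (A / B) * B :=
            mul_le_mul_of_nonneg_left hB'B (by positivity)
          have hAB : (A / B) * B = A := by field_simp
          linarith
      _ = ∑ i ∈ t, (a i * Real.log (A / B) + (a i - (A / B) * b i)) := by
          rw [Finset.sum_add_distrib, Finset.sum_sub_distrib, ← Finset.sum_mul,
            ← Finset.mul_sum, hAt]
      _ ≤ ∑ i ∈ t, a i * Real.log (a i / b i) := Finset.sum_le_sum key
      _ = ∑ i ∈ s, a i * Real.log (a i / b i) := hRt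

/-- **Evidence lower bound via discrete-time Markov chains.**  Let `X` be a Markov
chain on a finite set `S` with initial distribution `ν` and transitions `Q`, and set
`p(x) = P(X_N = x)`.  Fix `x₀ ∈ S` and let `Y^{x₀}` be any Markov chain with
transitions `R` such that (1) `Y^{x₀}_0` has the same distribution `ν` as `X_0`, and
(2) `P(Y^{x₀}_N = x₀) = 1`.  Writing `r_k(x) = P(Y^{x₀}_k = x)`, one has
`log p(x₀) ≥ − Σ_{k=0}^{N-1} E_{x_k ~ r_k}[Σ_y R_k(y,x_k) log(R_k(y,x_k)/Q_k(y,x_k))]`,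
the relevant absolute continuity being expressed by `habs`. -/
theorem elbo_via_dtmc
    (S : Type*) [Fintype S] (N : ℕ)
    (ν : S → ℝ) (Q : ℕ → S → S → ℝ)
    (hν0 : ∀ x, 0 ≤ ν x) (hν1 : ∑ x, ν x = 1)
    (hQ0 : ∀ k x y, 0 ≤ Q k y x) (hQ1 : ∀ k x, ∑ y, Q k y x = 1)
    (x0 : S)
    (R : ℕ → S → S → ℝ)
    (hR0 : ∀ k x y, 0 ≤ R k y x) (hR1 : ∀ k x, ∑ y, R k y x = 1)
    (hhit : chainDist ν R N x0 = 1)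
    (habs : ∀ k, k < N → ∀ x, 0 < chainDist ν R k x →
      ∀ y, 0 < R k y x → 0 < Q k y x) :
    Real.log (chainDist ν Q N x0)
      ≥ -∑ k ∈ Finset.range N, ∑ x, chainDist ν R k x *
            ∑ y, R k y x * Real.log (R k y x / Q k y x) := by
  classical
  set r := chainDist ν R with hr
  set q := chainDist ν Q with hq
  have hrn : ∀ k x, 0 ≤ r k x := chainDist_nonneg ν R hν0 hR0
  have hqn : ∀ k x, 0 ≤ q k x := chainDist_nonneg ν Q hν0 hQ0
  have hrs : ∀ k, ∑ x, r k x = 1 := chainDist_sum_one ν R hν1 hR1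
  -- marginal absolute continuity
  have marg : ∀ k, k ≤ N → ∀ x, 0 < r k x → 0 < q k x := by
    intro k
    induction k with
    | zero => intro _ x hx; exact hx
    | succ k ih =>
      intro hkN x hx
      have hkN' : k < N := Nat.lt_of_succ_le hkN
      have hx' : 0 < ∑ y, R k x y * r k y := hx
      obtain ⟨y, _, hy⟩ : ∃ y ∈ (Finset.univ : Finset S), 0 < R k x y * r k y := by
        by_contra hcon
        push_neg at hcon
        have : (∑ y, R k x y * r k y) ≤ 0 :=
          Finset.sum_nonpos fun y hy => hcon y hy
        linarith
      have hRy : 0 < R k x y ∧ 0 < r k y := by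
        rcases mul_pos_iff.mp hy with h | h
        · exact h
        · exact absurd h.1 (not_lt.mpr (hR0 k y x))
      have hQy : 0 < Q k x y := habs k hkN' y hRy.2 x hRy.1
      have hqy : 0 < q k y := ih hkN'.le y hRy.2
      have : Q k x y * q k y ≤ ∑ z, Q k x z * q k z :=
        Finset.single_le_sum (fun z _ => mul_nonneg (hQ0 k z x) (hqn k z))
          (Finset.mem_univ y)
      exact lt_of_lt_of_le (mul_pos hQy hqy) this
  -- one-step inequality for the KL divergence of the marginals
  set KL : ℕ → ℝ := fun k => ∑ x, r k x * Real.log (r k x / q k x) with hKL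
  set C : ℕ → ℝ := fun k => ∑ x, r k x * ∑ y, R k y x * Real.log (R k y x / Q k y x)
    with hC
  have step : ∀ k, k < N → KL (k + 1) ≤ KL k + C k := by
    intro k hkN
    have h1 : KL (k + 1) ≤ ∑ x, ∑ y, (R k x y * r k y) *
        Real.log ((R k x y * r k y) / (Q k x y * q k y)) := by
      apply Finset.sum_le_sum
      intro x _
      have := log_sum_ineq (Finset.univ : Finset S)
        (fun y => R k x y * r k y) (fun y => Q k x y * q k y)
        (fun y _ => mul_nonneg (hR0 k y x) (hrn k y))
        (fun y _ => mul_nonneg (hQ0 k y x) (hqn k y))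
        (fun y _ hy => by
          rcases mul_pos_iff.mp hy with h | h
          · exact mul_pos (habs k hkN y h.2 x h.1) (marg k hkN.le y h.2)
          · exact absurd h.1 (not_lt.mpr (hR0 k y x)))
      exact this
    have h2 : (∑ x, ∑ y, (R k x y * r k y) *
        Real.log ((R k x y * r k y) / (Q k x y * q k y))) = KL k + C k := by
      rw [Finset.sum_comm]
      have hterm : ∀ y x, (R k x y * r k y) *
          Real.log ((R k x y * r k y) / (Q k x y * q k y))
          = r k y * (R k x y * Real.log (R k x y / Q k x y))
            + R k x y * (r k y * Real.log (r k y / q k y)) := by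
        intro y x
        rcases eq_or_lt_of_le (hR0 k y x) with hR | hR
        · rw [← hR]; simp
        rcases eq_or_lt_of_le (hrn k y) with hry | hry
        · rw [← hry]; simp
        have hQ : 0 < Q k x y := habs k hkN y hry x hR
        have hqy : 0 < q k y := marg k hkN.le y hry
        rw [mul_div_mul_comm, Real.log_mul (by positivity) (by positivity)]
        ring
      calc ∑ y, ∑ x, (R k x y * r k y) *
            Real.log ((R k x y * r k y) / (Q k x y * q k y))
          = ∑ y, ∑ x, (r k y * (R k x y * Real.log (R k x y / Q k x y))
              + R k x y * (r k y * Real.log (r k y / q k y))) := by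
            exact Finset.sum_congr rfl fun y _ =>
              Finset.sum_congr rfl fun x _ => hterm y x
        _ = ∑ y, (r k y * ∑ x, R k x y * Real.log (R k x y / Q k x y)
              + (∑ x, R k x y) * (r k y * Real.log (r k y / q k y))) := by
            refine Finset.sum_congr rfl fun y _ => ?_
            rw [Finset.sum_add_distrib, Finset.mul_sum, Finset.sum_mul]
        _ = KL k + C k := by
            have h1 : ∀ y, (∑ x, R k x y) = 1 := fun y => hR1 k y
            simp only [h1, one_mul]
            rw [Finset.sum_add_distrib, add_comm]
    calc KL (k + 1) ≤ _ := h1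
      _ = KL k + C k := h2
  -- KL at time 0 is zero
  have kl0 : KL 0 = 0 := by
    apply Finset.sum_eq_zero
    intro x _
    rcases eq_or_lt_of_le (hν0 x) with h | h
    · show r 0 x * Real.log (r 0 x / q 0 x) = 0
      show ν x * Real.log (ν x / q 0 x) = 0
      rw [← h, zero_mul]
    · show ν x * Real.log (ν x / ν x) = 0
      rw [div_self h.ne', Real.log_one, mul_zero]
  -- induction: KL k ≤ partial sums of costs
  have bound : ∀ k, k ≤ N → KL k ≤ ∑ j ∈ Finset.range k, C j := by
    intro k
    induction k with
    | zero => intro _; simp [kl0]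
    | succ k ih =>
      intro hkN
      have hk : k < N := Nat.lt_of_succ_le hkN
      calc KL (k + 1) ≤ KL k + C k := step k hk
        _ ≤ (∑ j ∈ Finset.range k, C j) + C k := by linarith [ih hk.le]
        _ = ∑ j ∈ Finset.range (k + 1), C j := (Finset.sum_range_succ C k).symm
  -- KL at time N equals -log q N x0
  have klN : KL N = -Real.log (q N x0) := by
    have hzero : ∀ x ∈ Finset.univ.erase x0, r N x = 0 := by
      have hsum : ∑ x ∈ Finset.univ.erase x0, r N x = 0 := by
        have := hrs N
        rw [← Finset.add_sum_erase _ _ (Finset.mem_univ x0), hhit] at this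
        linarith
      intro x hx
      exact (Finset.sum_eq_zero_iff_of_nonneg
        (fun x _ => hrn N x)).mp hsum x hx
    show (∑ x, r N x * Real.log (r N x / q N x)) = -Real.log (q N x0)
    rw [← Finset.add_sum_erase _ _ (Finset.mem_univ x0)]
    rw [Finset.sum_eq_zero (fun x hx => by rw [hzero x hx, zero_mul]), add_zero]
    rw [hhit, one_mul, one_div, Real.log_inv]
  have := bound N le_rfl
  rw [klN] at this
  linarith
end

section
/- Final distribution of planner-guided sampling as a sum over unmasking orders: let V, D, G be as below and let p^G(x) be the distribution of the sequence x_L produced by sampling with the planner. Then for every x ∈ V^L, p^G(x) = Σ_{σ ∈ Σ^L} Π_{k=1}^L Cat( x^{σ(k)}; D^{σ(k)}( x^{σ(<k)} ) ) · F( x^{σ(<k)}, x^{σ(k)}, σ(k) ), where Σ^L is the set of permutations of {1,...,L}, x^{σ(<k)} denotes x with every coordinate outside {σ(1),...,σ(k-1)} replaced by m, and F(x, y, i) = E_{z ~ D(x)}[ Cat(i; G(z^{-i,y}, x)) ]. -/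
open Finset

/-- `Fplan D G x y i = E_{z ~ D(x)}[ Cat(i ; G(z^{-i,y}, x)) ]`, the coordinates of `z`
being sampled independently, `z^j ~ D^j(x)`. -/
noncomputable def Fplan {V : Type*} [Fintype V] [DecidableEq V] {L : ℕ}
    (D : (Fin L → V) → Fin L → V → ℝ)
    (G : (Fin L → V) → (Fin L → V) → Fin L → ℝ)
    (x : Fin L → V) (y : V) (i : Fin L) : ℝ :=
  ∑ z : Fin L → V, (∏ j, D x j (z j)) * G (Function.update z i y) x i

/-- One step of planner-guided sampling: from state `x`, sample `z ~ D(x)`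
coordinatewise independently, sample a position `i ~ G(z, x)`, and replace the `i`-th
coordinate of `x` by `z i`.  `stepKernel D G x w` is the probability of moving to `w`. -/
noncomputable def stepKernel {V : Type*} [Fintype V] [DecidableEq V] {L : ℕ}
    (D : (Fin L → V) → Fin L → V → ℝ)
    (G : (Fin L → V) → (Fin L → V) → Fin L → ℝ)
    (x w : Fin L → V) : ℝ :=
  ∑ z : Fin L → V, (∏ j, D x j (z j)) *
    ∑ i ∈ Finset.univ.filter (fun i : Fin L => Function.update x i (z i) = w), G z x i

/-- The distribution of the state after `k` steps of planner-guided sampling,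
starting from the fully masked sequence. -/
noncomputable def sampleDist {V : Type*} [Fintype V] [DecidableEq V] {L : ℕ}
    (D : (Fin L → V) → Fin L → V → ℝ)
    (G : (Fin L → V) → (Fin L → V) → Fin L → ℝ)
    (mask : V) : ℕ → (Fin L → V) → ℝ
  | 0, w => if w = (fun _ => mask) then (1 : ℝ) else 0
  | k + 1, w => ∑ x : Fin L → V, sampleDist D G mask k x * stepKernel D G x w

/-- `x^{σ(<k)}`: the sequence `x` with every coordinate outside `{σ 0, …, σ (k-1)}`
replaced by the mask symbol. -/
def prefixMask {V : Type*} [DecidableEq V] {L : ℕ}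
    (mask : V) (x : Fin L → V) (σ : Equiv.Perm (Fin L)) (k : Fin L) : Fin L → V :=
  fun i => if ∃ j : Fin L, j < k ∧ σ j = i then x i else mask

/-!
Read backwards, a state `w` can only be entered from `x = update w i mask` for some position `i`
(the planner never picks an unmasked position), with probability `D^i(x)(w i) · F(x, w i, i)`:
conditioning `z ~ D(x)` on `z i = y` and summing out the `i`-th coordinate of `z` turns
`E_z[G(z, x)_i ; z i = y]` into `D^i(x)(y) · F(x, y, i)`. Unrolling `k` steps from the fully
masked state gives a sum over injective sequences `f : Fin k ↪ Fin L` of unmasked positions,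
restricted to states masked off the range of `f`; for `k = L` these are the permutations.
-/

open Function

theorem sum_ite_apply_eq_mul_sum_update {ι β R : Type*} [Fintype ι] [DecidableEq ι] [Fintype β]
    [DecidableEq β] [CommSemiring R] (p : ι → β → R) (H : (ι → β) → R) (i : ι) (y : β)
    (hp : ∑ b, p i b = 1) :
    ∑ z : ι → β, (if z i = y then (∏ j, p j (z j)) * H z else 0)
      = p i y * ∑ z : ι → β, (∏ j, p j (z j)) * H (update z i y) := by
  set e := (Equiv.funSplitAt i β).symm
  have sum_split (F : (ι → β) → R) : ∑ z, F z = ∑ a, ∑ r, F (e (a, r)) := by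
    rw [← e.sum_comp, Fintype.sum_prod_type]
  have prod_split (a r) : ∏ j, p j (e (a, r) j) = p i a * ∏ j : {j // j ≠ i}, p j (r j) := by
    rw [Fintype.prod_eq_mul_prod_subtype_ne _ i]
    simp [e, fun j : {j // j ≠ i} => j.2]
  have update_split (a r) : update (e (a, r)) i y = e (y, r) := by
    ext j
    by_cases hj : j = i
    · subst hj
      simp [e]
    · simp [e, hj]
  have apply_split (a r) : e (a, r) i = a := by simp [e]
  simp only [sum_split, prod_split, update_split, apply_split, mul_assoc, ← Finset.mul_sum,
    ← Finset.sum_mul, hp, one_mul]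
  rw [Finset.sum_comm]
  simp [Finset.mul_sum]

namespace Fin.Embedding

def snocEquiv (k : ℕ) (α : Type*) :
    (Σ f : Fin k ↪ α, {a // a ∉ Set.range f}) ≃ (Fin (k + 1) ↪ α) where
  toFun p := snoc p.1 p.2.2
  invFun g := ⟨init g, g (Fin.last k), by
    rintro ⟨j, hj⟩
    exact (Fin.castSucc_lt_last j).ne (g.injective hj)⟩
  left_inv p := Sigma.subtype_ext (init_snoc _ _) snoc_last
  right_inv g := by
    ext j
    induction j using Fin.lastCases with
    | last => exact snoc_last
    | cast j => exact snoc_castSucc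

theorem sum_eq_sum_snoc {k : ℕ} {α M : Type*} [Fintype α] [DecidableEq α] [AddCommMonoid M]
    (F : (Fin (k + 1) ↪ α) → M) :
    ∑ g, F g = ∑ f : Fin k ↪ α, ∑ a : {a // a ∉ Set.range f}, F (snoc f a.2) := by
  rw [← (snocEquiv k α).sum_comp, Fintype.sum_sigma]
  rfl

end Fin.Embedding

section Step

variable {V : Type*} [Fintype V] [DecidableEq V] {L : ℕ}

noncomputable def unmaskProb (D : (Fin L → V) → Fin L → V → ℝ)
    (G : (Fin L → V) → (Fin L → V) → Fin L → ℝ) (x : Fin L → V) (i : Fin L) (y : V) : ℝ :=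
  D x i y * Fplan D G x y i

variable {D : (Fin L → V) → Fin L → V → ℝ} {G : (Fin L → V) → (Fin L → V) → Fin L → ℝ}
  {mask : V}

theorem stepKernel_eq_sum_unmaskProb (hD1 : ∀ x i, ∑ y, D x i y = 1) (x w : Fin L → V) :
    stepKernel D G x w
      = ∑ i, if ∀ j ≠ i, x j = w j then unmaskProb D G x i (w i) else 0 := by
  simp only [stepKernel, Finset.sum_filter, Finset.mul_sum, mul_ite, mul_zero]
  rw [Finset.sum_comm]
  refine Finset.sum_congr rfl fun i _ => ?_
  simp only [update_eq_iff]
  split_ifs with hx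
  · simp only [and_iff_left hx]
    rw [unmaskProb, sum_ite_apply_eq_mul_sum_update (D x) (fun z => G z x i) i (w i) (hD1 x i)]
    rfl
  · simp [hx]

theorem unmaskProb_mask (hDmask : ∀ x i, D x i mask = 0) (x : Fin L → V) (i : Fin L) :
    unmaskProb D G x i mask = 0 := by
  rw [unmaskProb, hDmask, zero_mul]

theorem unmaskProb_eq_zero_of_ne_mask (hGsupp : ∀ z x i, x i ≠ mask → G z x i = 0)
    {x : Fin L → V} {i : Fin L} (hx : x i ≠ mask) (y : V) : unmaskProb D G x i y = 0 := by
  simp [unmaskProb, Fplan, hGsupp _ _ _ hx]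

theorem sum_mul_stepKernel (hD1 : ∀ x i, ∑ y, D x i y = 1)
    (hGsupp : ∀ z x i, x i ≠ mask → G z x i = 0) (A : (Fin L → V) → ℝ) (w : Fin L → V) :
    ∑ x, A x * stepKernel D G x w
      = ∑ i, A (update w i mask) * unmaskProb D G (update w i mask) i (w i) := by
  simp only [stepKernel_eq_sum_unmaskProb hD1, Finset.mul_sum]
  rw [Finset.sum_comm]
  refine Finset.sum_congr rfl fun i _ => ?_
  refine (Finset.sum_eq_single (update w i mask) (fun x _ hx => ?_) (by simp)).trans ?_
  · split_ifs with hxw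
    · refine mul_eq_zero_of_right _ (unmaskProb_eq_zero_of_ne_mask hGsupp (fun hxi => hx ?_) _)
      exact eq_update_iff.mpr ⟨hxi, hxw⟩
    · exact mul_zero _
  · rw [if_pos fun j hj => update_of_ne hj _ _]

theorem sampleDist_succ (hD1 : ∀ x i, ∑ y, D x i y = 1)
    (hGsupp : ∀ z x i, x i ≠ mask → G z x i = 0) (k : ℕ) (w : Fin L → V) :
    sampleDist D G mask (k + 1) w
      = ∑ i, sampleDist D G mask k (update w i mask)
          * unmaskProb D G (update w i mask) i (w i) :=
  sum_mul_stepKernel hD1 hGsupp _ w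

end Step

section PrefixMask

variable {V : Type*} {L k : ℕ} {mask : V} {f : Fin k ↪ Fin L} {i : Fin L}

/-- `prefixMask` for a partial unmasking order: `f n` is the position unmasked at step `n`. -/
def embPrefixMask (mask : V) (x : Fin L → V) (f : Fin k ↪ Fin L) (n : Fin k) : Fin L → V :=
  fun i => if ∃ j, j < n ∧ f j = i then x i else mask

theorem embPrefixMask_update_of_notMem_range (hi : i ∉ Set.range f) (x : Fin L → V)
    (n : Fin k) : embPrefixMask mask (update x i mask) f n = embPrefixMask mask x f n := by
  ext i'
  simp only [embPrefixMask]
  split_ifs with h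
  · obtain ⟨j, -, rfl⟩ := h
    exact update_of_ne (fun hj => hi ⟨j, hj⟩) _ _
  · rfl

theorem embPrefixMask_snoc_castSucc (hi : i ∉ Set.range f) (x : Fin L → V) (n : Fin k) :
    embPrefixMask mask x (Fin.Embedding.snoc f hi) n.castSucc = embPrefixMask mask x f n := by
  ext i'
  simp [embPrefixMask, Fin.exists_fin_succ', (Fin.castSucc_lt_last n).not_gt]

theorem embPrefixMask_snoc_last (hi : i ∉ Set.range f) {x : Fin L → V}
    (hx : ∀ j ∉ Set.range (Fin.Embedding.snoc f hi), x j = mask) :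
    embPrefixMask mask x (Fin.Embedding.snoc f hi) (Fin.last k) = update x i mask := by
  ext i'
  have mem_prefix : (∃ j, j < Fin.last k ∧ Fin.Embedding.snoc f hi j = i') ↔
      i' ∈ Set.range f := by
    simp [Fin.exists_fin_succ', Fin.castSucc_lt_last]
  simp only [embPrefixMask, mem_prefix]
  by_cases hii : i' = i
  · subst hii
    simp [hi]
  · rw [update_of_ne hii]
    split_ifs with h
    · rfl
    · exact (hx i' (by simp [Fin.range_snoc, hii, h])).symm

end PrefixMask

section OrderWeight

variable {V : Type*} [Fintype V] [DecidableEq V] {L k : ℕ}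

noncomputable def orderWeight (D : (Fin L → V) → Fin L → V → ℝ)
    (G : (Fin L → V) → (Fin L → V) → Fin L → ℝ) (mask : V) (f : Fin k ↪ Fin L)
    (x : Fin L → V) : ℝ :=
  ∏ n, unmaskProb D G (embPrefixMask mask x f n) (f n) (x (f n))

variable {D : (Fin L → V) → Fin L → V → ℝ} {G : (Fin L → V) → (Fin L → V) → Fin L → ℝ}
  {mask : V} {f : Fin k ↪ Fin L} {i : Fin L}

theorem orderWeight_update_of_notMem_range (hi : i ∉ Set.range f) (x : Fin L → V) :
    orderWeight D G mask f (update x i mask) = orderWeight D G mask f x := by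
  refine Finset.prod_congr rfl fun n _ => ?_
  rw [embPrefixMask_update_of_notMem_range hi, update_of_ne (fun h => hi ⟨n, h⟩)]

theorem orderWeight_snoc (hi : i ∉ Set.range f) (x : Fin L → V) :
    orderWeight D G mask (Fin.Embedding.snoc f hi) x = orderWeight D G mask f x *
      unmaskProb D G (embPrefixMask mask x (Fin.Embedding.snoc f hi) (Fin.last k)) i (x i) := by
  simp only [orderWeight, Fin.prod_univ_castSucc, embPrefixMask_snoc_castSucc,
    Fin.Embedding.snoc_castSucc, Fin.Embedding.snoc_last]

theorem orderWeight_eq_zero (hDmask : ∀ x i, D x i mask = 0) {x : Fin L → V} {n : Fin k}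
    (hx : x (f n) = mask) : orderWeight D G mask f x = 0 :=
  Finset.prod_eq_zero (Finset.mem_univ n) (by rw [hx, unmaskProb_mask hDmask])

theorem ite_orderWeight_snoc (hi : i ∉ Set.range f) (w : Fin L → V) :
    (if ∀ j ∉ Set.range f, update w i mask j = mask
      then orderWeight D G mask f (update w i mask) else 0)
        * unmaskProb D G (update w i mask) i (w i)
      = if ∀ j ∉ Set.range (Fin.Embedding.snoc f hi), w j = mask
        then orderWeight D G mask (Fin.Embedding.snoc f hi) w else 0 := by
  have masked_iff : (∀ j ∉ Set.range f, update w i mask j = mask)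
      ↔ ∀ j ∉ Set.range (Fin.Embedding.snoc f hi), w j = mask := by
    simp only [Fin.Embedding.coe_snoc, Fin.range_snoc, Set.mem_insert_iff, not_or]
    constructor
    · rintro h j ⟨hji, hjf⟩
      simpa [update_of_ne hji] using h j hjf
    · intro h j hjf
      by_cases hji : j = i
      · rw [hji, update_self]
      · rw [update_of_ne hji]
        exact h j ⟨hji, hjf⟩
  rw [if_congr masked_iff rfl rfl]
  split_ifs with h
  · rw [orderWeight_snoc, embPrefixMask_snoc_last hi h, orderWeight_update_of_notMem_range hi]
  · exact zero_mul _

theorem sampleDist_eq_sum_embedding (hD1 : ∀ x i, ∑ y, D x i y = 1)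
    (hDmask : ∀ x i, D x i mask = 0) (hGsupp : ∀ z x i, x i ≠ mask → G z x i = 0)
    (w : Fin L → V) :
    sampleDist D G mask k w = ∑ f : Fin k ↪ Fin L,
      if ∀ i ∉ Set.range f, w i = mask then orderWeight D G mask f w else 0 := by
  induction k generalizing w with
  | zero => simp [sampleDist, orderWeight, funext_iff]
  | succ k ih =>
    rw [sampleDist_succ hD1 hGsupp, Fin.Embedding.sum_eq_sum_snoc]
    simp only [ih, Finset.sum_mul]
    rw [Finset.sum_comm]
    refine Finset.sum_congr rfl fun f _ => ?_
    rw [← Fintype.sum_subtype_add_sum_subtype (· ∉ Set.range f),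
      Fintype.sum_eq_zero _ fun i : {i // ¬i ∉ Set.range f} => ?_, add_zero]
    · exact Fintype.sum_congr _ _ fun i => ite_orderWeight_snoc i.2 w
    · obtain ⟨i, hi⟩ := i
      obtain ⟨n, rfl⟩ := not_not.mp hi
      rw [orderWeight_eq_zero hDmask (update_self _ _ _), ite_self, zero_mul]

end OrderWeight

theorem planner_final_distribution_general
    {V : Type*} [Fintype V] [DecidableEq V] {L : ℕ}
    (mask : V)
    (D : (Fin L → V) → Fin L → V → ℝ)
    (G : (Fin L → V) → (Fin L → V) → Fin L → ℝ)
    (hD1 : ∀ x i, ∑ y, D x i y = 1)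
    (hDmask : ∀ x i, D x i mask = 0)
    (hGsupp : ∀ z x i, x i ≠ mask → G z x i = 0)
    (x : Fin L → V) :
    sampleDist D G mask L x
      = ∑ σ : Equiv.Perm (Fin L), ∏ k : Fin L,
          D (prefixMask mask x σ k) (σ k) (x (σ k)) *
            Fplan D G (prefixMask mask x σ k) (x (σ k)) (σ k) := by
  rw [sampleDist_eq_sum_embedding hD1 hDmask hGsupp,
    ← (Equiv.embeddingEquivOfFinite (Fin L)).symm.sum_comp]
  refine Finset.sum_congr rfl fun σ _ => ?_
  rw [if_pos fun i hi => absurd ⟨σ.symm i, by simp⟩ hi]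
  rfl

/-- **Final distribution of planner-guided sampling as a sum over unmasking orders.**
For a denoiser `D` (which never outputs the mask token) and a planner `G` supported on
masked positions, the distribution `p^G` of the sequence produced after `L` steps of
planner-guided sampling satisfies, for every `x`,
`p^G(x) = Σ_{σ ∈ Σ^L} Π_{k=1}^{L} Cat(x^{σ(k)}; D^{σ(k)}(x^{σ(<k)})) · F(x^{σ(<k)}, x^{σ(k)}, σ(k))`. -/
theorem planner_final_distribution
    {V : Type*} [Fintype V] [DecidableEq V] {L : ℕ}
    (mask : V)
    (D : (Fin L → V) → Fin L → V → ℝ)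
    (G : (Fin L → V) → (Fin L → V) → Fin L → ℝ)
    (hD0 : ∀ x i y, 0 ≤ D x i y) (hD1 : ∀ x i, ∑ y, D x i y = 1)
    (hDmask : ∀ x i, D x i mask = 0)
    (hG0 : ∀ z x i, 0 ≤ G z x i)
    (hG1 : ∀ z x, (∃ i, x i = mask) → ∑ i, G z x i = 1)
    (hGsupp : ∀ z x i, x i ≠ mask → G z x i = 0)
    (x : Fin L → V) :
    sampleDist D G mask L x
      = ∑ σ : Equiv.Perm (Fin L), ∏ k : Fin L,
          D (prefixMask mask x σ k) (σ k) (x (σ k)) *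
            Fplan D G (prefixMask mask x σ k) (x (σ k)) (σ k) :=
  planner_final_distribution_general mask D G hD1 hDmask hGsupp x
end

section
/- Planner-aware evidence lower bound (P-ELBO): let V, D, G be as below, let p^G(x_0) be the probability that planner-guided sampling produces x_0, and let r^G_k(·; x_0) be the step-k distribution of the reference chain Y^{x_0}. Then log p^G(x_0) ≥ 𝓔_1(x_0) + 𝓔_2(x_0), where 𝓔_1(x_0) = L · E_{k ~ Unif({0,...,L-1})} E_{x_k ~ r^G_k(·;x_0)}[ Σ_{i : x_k^i = m} Cat(i; G(x_0, x_k)) · log Cat( x_0^i; D^i(x_k) ) ] and 𝓔_2(x_0) = − L · E_{k ~ Unif({0,...,L-1})} E_{x_k ~ r^G_k(·;x_0)}[ Σ_{i : x_k^i = m} Cat(i; G(x_0, x_k)) · log( Cat(i; G(x_0, x_k)) / F(x_k, x_0^i, i) ) ], with F(x, y, i) = E_{z ~ D(x)}[ Cat(i; G(z^{-i,y}, x)) ]. -/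
/-!
Let `reachProb D G x₀ n x` be the probability that planner-guided sampling started at `x` is at
`x₀` after `n` more steps, so that `p^G(x₀) = reachProb D G x₀ L (m, …, m)`. From a state `x`,
the event "`z^i = x₀^i` and the planner picks `i`" has probability exactly
`D^i(x)(x₀^i) · F(x, x₀^i, i)` because the coordinates of `z` are independent, and for distinct
masked `i` these events lead to distinct states `x^{i ← x₀^i}`. Jensen's inequality for `log`
with the weights `G(x₀, x)` then gives, for `x` in the support of `r^G_k`,
`elboIntegrand x + E_{i ~ G(x₀, x)} log b_n(x^{i ← x₀^i}) ≤ log b_{n+1}(x)` with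
`b = reachProb D G x₀` and `k + n + 1 = L`. Averaging over `r^G_k` and telescoping from
`k = L - 1` down to `k = 0` bounds `log p^G(x₀)` below by `∑_{k < L} E_{r^G_k} elboIntegrand`,
which is `𝓔₁ + 𝓔₂`.
-/

open Finset

/-- The step-`k` law `r^G_k(·; x₀)` of the reference chain `Y^{x₀}`: starting from the
fully masked sequence, at each step a masked coordinate `i` is selected with
probability `Cat(i; G(x₀, x))` and set to `x₀ i`. -/
noncomputable def refDist {V : Type*} [Fintype V] [DecidableEq V] {L : ℕ}
    (G : (Fin L → V) → (Fin L → V) → Fin L → ℝ)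
    (mask : V) (x0 : Fin L → V) : ℕ → (Fin L → V) → ℝ
  | 0, w => if w = (fun _ => mask) then (1 : ℝ) else 0
  | k + 1, w => ∑ x : Fin L → V,
      refDist G mask x0 k x *
        ∑ i ∈ Finset.univ.filter
            (fun i : Fin L => x i = mask ∧ Function.update x i (x0 i) = w),
          G x0 x i

theorem Real.sum_mul_log_div_le_log {ι : Type*} {s : Finset ι} {w a : ι → ℝ} {b : ℝ}
    (hw0 : ∀ i ∈ s, 0 ≤ w i) (hw1 : ∑ i ∈ s, w i = 1) (ha0 : ∀ i ∈ s, 0 ≤ a i)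
    (ha : ∀ i ∈ s, 0 < w i → 0 < a i) (hb : ∑ i ∈ s, a i ≤ b) :
    ∑ i ∈ s, w i * Real.log (a i / w i) ≤ Real.log b := by
  set t := s.filter (fun i => 0 < w i)
  have hwt : ∑ i ∈ t, w i = 1 := by
    rw [sum_filter_of_ne fun i hi h => (hw0 i hi).lt_of_ne' h, hw1]
  have hat : 0 < ∑ i ∈ t, a i := by
    obtain ⟨i, hi⟩ := nonempty_of_sum_ne_zero (hwt ▸ one_ne_zero)
    have hi' := mem_filter.1 hi
    exact sum_pos' (fun j hj => ha0 j (mem_filter.1 hj).1) ⟨i, hi, ha i hi'.1 hi'.2⟩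
  calc ∑ i ∈ s, w i * Real.log (a i / w i) = ∑ i ∈ t, w i * Real.log (a i / w i) := by
        rw [sum_filter_of_ne fun i hi h => (hw0 i hi).lt_of_ne' (left_ne_zero_of_mul h)]
    _ ≤ Real.log (∑ i ∈ t, w i * (a i / w i)) := by
        simpa only [smul_eq_mul] using strictConcaveOn_log_Ioi.concaveOn.le_map_sum
          (fun i hi => (mem_filter.1 hi).2.le) hwt
          fun i hi => Set.mem_Ioi.2 (div_pos (ha i (mem_filter.1 hi).1 (mem_filter.1 hi).2)
            (mem_filter.1 hi).2)
    _ = Real.log (∑ i ∈ t, a i) := by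
        congr 1
        exact sum_congr rfl fun i hi => mul_div_cancel₀ _ (mem_filter.1 hi).2.ne'
    _ ≤ Real.log b :=
        Real.log_le_log hat ((sum_le_sum_of_subset_of_nonneg (filter_subset _ s)
          fun i hi _ => ha0 i hi).trans hb)

theorem mul_sum_prod_mul_update {ι V : Type*} [Fintype ι] [DecidableEq ι] [Fintype V]
    [DecidableEq V] (p : ι → V → ℝ) (f : (ι → V) → ℝ) (i : ι) (hp : ∑ c, p i c = 1) (y : V) :
    p i y * ∑ z, (∏ j, p j (z j)) * f (Function.update z i y)
      = ∑ z with z i = y, (∏ j, p j (z j)) * f z := by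
  let e := (Equiv.funSplitAt i V).symm
  have hprod : ∀ c w, ∏ j, p j (e (c, w) j) = p i c * ∏ j : {j // j ≠ i}, p j (w j) := by
    intro c w
    rw [Fintype.prod_eq_mul_prod_subtype_ne _ i]
    congr 1
    · simp [e]
    · exact Fintype.prod_congr _ _ fun j => by simp [e, j.2]
  have hupd : ∀ c w, Function.update (e (c, w)) i y = e (y, w) := by
    intro c w
    ext j
    by_cases hj : j = i <;> simp [e, hj, Function.update]
  rw [sum_filter, ← e.sum_comp, ← e.sum_comp, Fintype.sum_prod_type, Fintype.sum_prod_type]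
  simp only [hprod, hupd]
  simp [e, mul_assoc, ← mul_sum, ← sum_mul, hp]

theorem Function.update_injOn {ι α : Type*} [DecidableEq ι] (x y : ι → α) :
    Set.InjOn (fun i => Function.update x i (y i)) {i | y i ≠ x i} := by
  intro a _ b hb hab
  by_contra hne
  have := congrFun hab b
  simp only [Function.update_self, Function.update_of_ne (Ne.symm hne)] at this
  exact hb this.symm

theorem natCast_mul_inv_mul_sum_range (n : ℕ) (f : ℕ → ℝ) :
    (n : ℝ) * ((n : ℝ)⁻¹ * ∑ k ∈ range n, f k) = ∑ k ∈ range n, f k := by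
  rcases n.eq_zero_or_pos with rfl | hn
  · simp
  · exact mul_inv_cancel_left₀ (by positivity) _

theorem sum_masked_planner_eq_one {V : Type*} [DecidableEq V] {L : ℕ} {mask : V}
    {G : (Fin L → V) → (Fin L → V) → Fin L → ℝ}
    (hG1 : ∀ z x, (∃ i, x i = mask) → ∑ i, G z x i = 1)
    (hGsupp : ∀ z x i, x i ≠ mask → G z x i = 0) (z : Fin L → V) {x : Fin L → V}
    (hx : ∃ i, x i = mask) : ∑ i with x i = mask, G z x i = 1 := by
  rw [← hG1 z x hx]
  exact sum_filter_of_ne fun i _ hG => by_contra fun hi => hG (hGsupp z x i hi)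

section Planner

variable {V : Type*} [Fintype V] [DecidableEq V] {L : ℕ}
  (D : (Fin L → V) → Fin L → V → ℝ) (G : (Fin L → V) → (Fin L → V) → Fin L → ℝ)
  (mask : V) (x0 : Fin L → V)

noncomputable def reachProb : ℕ → (Fin L → V) → ℝ
  | 0, x => if x = x0 then 1 else 0
  | n + 1, x => ∑ w, stepKernel D G x w * reachProb n w

noncomputable def elboIntegrand (x : Fin L → V) : ℝ :=
  ∑ i with x i = mask,
    G x0 x i * (Real.log (D x i (x0 i)) - Real.log (G x0 x i / Fplan D G x (x0 i) i))

variable {D G mask x0}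

theorem mul_Fplan_eq_sum (hD1 : ∀ x i, ∑ y, D x i y = 1) (x : Fin L → V) (i : Fin L) (y : V) :
    D x i y * Fplan D G x y i = ∑ z with z i = y, (∏ j, D x j (z j)) * G z x i :=
  mul_sum_prod_mul_update (D x) (fun z => G z x i) i (hD1 x i) y

theorem mul_Fplan_le_stepKernel (hD0 : ∀ x i y, 0 ≤ D x i y) (hD1 : ∀ x i, ∑ y, D x i y = 1)
    (hG0 : ∀ z x i, 0 ≤ G z x i) (x : Fin L → V) (i : Fin L) (y : V) :
    D x i y * Fplan D G x y i ≤ stepKernel D G x (Function.update x i y) := by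
  rw [mul_Fplan_eq_sum hD1, stepKernel, sum_filter]
  refine sum_le_sum fun z _ => ?_
  have hprod : 0 ≤ ∏ j, D x j (z j) := prod_nonneg fun j _ => hD0 x j (z j)
  split_ifs with hz
  · refine mul_le_mul_of_nonneg_left (single_le_sum (fun j _ => hG0 z x j) ?_) hprod
    simp [hz]
  · exact mul_nonneg hprod (sum_nonneg fun j _ => hG0 z x j)

theorem stepKernel_nonneg (hD0 : ∀ x i y, 0 ≤ D x i y) (hG0 : ∀ z x i, 0 ≤ G z x i)
    (x w : Fin L → V) : 0 ≤ stepKernel D G x w :=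
  sum_nonneg fun _ _ => mul_nonneg (prod_nonneg fun _ _ => hD0 _ _ _)
    (sum_nonneg fun _ _ => hG0 _ _ _)

theorem Fplan_nonneg (hD0 : ∀ x i y, 0 ≤ D x i y) (hG0 : ∀ z x i, 0 ≤ G z x i)
    (x : Fin L → V) (y : V) (i : Fin L) : 0 ≤ Fplan D G x y i :=
  sum_nonneg fun _ _ => mul_nonneg (prod_nonneg fun _ _ => hD0 _ _ _) (hG0 _ _ _)

theorem reachProb_nonneg (hD0 : ∀ x i y, 0 ≤ D x i y) (hG0 : ∀ z x i, 0 ≤ G z x i) :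
    ∀ n x, 0 ≤ reachProb D G x0 n x
  | 0, x => by unfold reachProb; positivity
  | n + 1, x => sum_nonneg fun w _ =>
      mul_nonneg (stepKernel_nonneg hD0 hG0 x w) (reachProb_nonneg hD0 hG0 n w)

theorem sum_sampleDist_mul_reachProb (n : ℕ) :
    ∀ k, ∑ x, sampleDist D G mask k x * reachProb D G x0 n x
      = sampleDist D G mask (k + n) x0 := by
  induction n with
  | zero => simp [reachProb]
  | succ n ih =>
    intro k
    rw [← add_assoc, add_right_comm, ← ih (k + 1)]
    simp only [reachProb, sampleDist, mul_sum, sum_mul, mul_assoc]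
    exact sum_comm

theorem sampleDist_eq_reachProb (n : ℕ) :
    sampleDist D G mask n x0 = reachProb D G x0 n (fun _ => mask) := by
  simpa [sampleDist] using (sum_sampleDist_mul_reachProb (mask := mask) n 0).symm

theorem stepKernel_mul_le_reachProb_succ (hD0 : ∀ x i y, 0 ≤ D x i y)
    (hG0 : ∀ z x i, 0 ≤ G z x i) (n : ℕ) (x w : Fin L → V) :
    stepKernel D G x w * reachProb D G x0 n w ≤ reachProb D G x0 (n + 1) x :=
  single_le_sum (f := fun w => stepKernel D G x w * reachProb D G x0 n w)
    (fun w _ => mul_nonneg (stepKernel_nonneg hD0 hG0 x w) (reachProb_nonneg hD0 hG0 n w))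
    (mem_univ w)

theorem sum_masked_le_reachProb_succ (hD0 : ∀ x i y, 0 ≤ D x i y)
    (hD1 : ∀ x i, ∑ y, D x i y = 1) (hG0 : ∀ z x i, 0 ≤ G z x i) (hx0 : ∀ i, x0 i ≠ mask)
    (n : ℕ) (x : Fin L → V) :
    ∑ i with x i = mask,
        D x i (x0 i) * Fplan D G x (x0 i) i * reachProb D G x0 n (Function.update x i (x0 i))
      ≤ reachProb D G x0 (n + 1) x := by
  have hinj : Set.InjOn (fun i => Function.update x i (x0 i)) ↑(univ.filter (x · = mask)) :=
    (Function.update_injOn x x0).mono fun i hi => by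
      simpa [(mem_filter.1 (mem_coe.1 hi)).2] using hx0 i
  calc _ ≤ ∑ i with x i = mask, stepKernel D G x (Function.update x i (x0 i)) *
          reachProb D G x0 n (Function.update x i (x0 i)) :=
        sum_le_sum fun i _ => mul_le_mul_of_nonneg_right
          (mul_Fplan_le_stepKernel hD0 hD1 hG0 x i (x0 i)) (reachProb_nonneg hD0 hG0 n _)
    _ = ∑ w ∈ (univ.filter (x · = mask)).image (fun i => Function.update x i (x0 i)),
          stepKernel D G x w * reachProb D G x0 n w :=
        (sum_image (f := fun w => stepKernel D G x w * reachProb D G x0 n w) hinj).symm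
    _ ≤ reachProb D G x0 (n + 1) x :=
        sum_le_univ_sum_of_nonneg fun w =>
          mul_nonneg (stepKernel_nonneg hD0 hG0 x w) (reachProb_nonneg hD0 hG0 n w)

theorem refDist_nonneg (hG0 : ∀ z x i, 0 ≤ G z x i) : ∀ k x, 0 ≤ refDist G mask x0 k x
  | 0, x => by unfold refDist; positivity
  | k + 1, x => sum_nonneg fun x' _ =>
      mul_nonneg (refDist_nonneg hG0 k x') (sum_nonneg fun _ _ => hG0 _ _ _)

theorem refDist_succ_pos_iff (hG0 : ∀ z x i, 0 ≤ G z x i) {k : ℕ} {w : Fin L → V} :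
    0 < refDist G mask x0 (k + 1) w ↔ ∃ x i, 0 < refDist G mask x0 k x ∧ x i = mask ∧
      0 < G x0 x i ∧ Function.update x i (x0 i) = w := by
  have hmul : ∀ a b : ℝ, 0 ≤ a → 0 ≤ b → (0 < a * b ↔ 0 < a ∧ 0 < b) := fun a b _ _ => by
    rw [mul_pos_iff]; constructor <;> intro h <;> grind
  rw [refDist, sum_pos_iff_of_nonneg fun x _ => mul_nonneg (refDist_nonneg hG0 k x)
    (sum_nonneg fun _ _ => hG0 _ _ _)]
  simp only [mem_univ, true_and]
  refine exists_congr fun x => ?_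
  rw [hmul _ _ (refDist_nonneg hG0 k x)
    (sum_nonneg fun _ _ => hG0 _ _ _), sum_pos_iff_of_nonneg fun _ _ => hG0 _ _ _]
  simp only [mem_filter, mem_univ, true_and]
  grind

theorem refDist_pos_support (hG0 : ∀ z x i, 0 ≤ G z x i) (hx0 : ∀ i, x0 i ≠ mask) :
    ∀ k x, 0 < refDist G mask x0 k x →
      (∀ i, x i ≠ mask → x i = x0 i) ∧ #{i | x i ≠ mask} = k
  | 0, x, h => by
    obtain rfl : x = fun _ => mask := by by_contra hx; simp [refDist, hx] at h
    simp
  | k + 1, _, h => by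
    obtain ⟨x, i, hx, hxi, -, rfl⟩ := (refDist_succ_pos_iff hG0).1 h
    obtain ⟨hagree, hcard⟩ := refDist_pos_support hG0 hx0 k x hx
    have hunmasked : univ.filter (Function.update x i (x0 i) · ≠ mask)
        = insert i (univ.filter (x · ≠ mask)) := by
      ext j
      by_cases hj : j = i
      · simp [hj, hx0]
      · simp [hj]
    refine ⟨fun j hj => ?_, ?_⟩
    · by_cases hji : j = i
      · simp [hji]
      · simp only [Function.update_of_ne hji] at hj ⊢
        exact hagree j hj
    · rw [hunmasked, card_insert_of_notMem (by simp [hxi]), hcard]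

theorem exists_mask_of_refDist_pos (hG0 : ∀ z x i, 0 ≤ G z x i) (hx0 : ∀ i, x0 i ≠ mask)
    {k : ℕ} (hk : k < L) {x : Fin L → V} (h : 0 < refDist G mask x0 k x) :
    ∃ i, x i = mask := by
  by_contra! hne
  have hcard := (refDist_pos_support hG0 hx0 k x h).2
  rw [filter_true_of_mem fun i _ => hne i, card_univ, Fintype.card_fin] at hcard
  omega

theorem eq_of_refDist_pos (hG0 : ∀ z x i, 0 ≤ G z x i) (hx0 : ∀ i, x0 i ≠ mask)
    {x : Fin L → V} (h : 0 < refDist G mask x0 L x) : x = x0 := by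
  obtain ⟨hagree, hcard⟩ := refDist_pos_support hG0 hx0 L x h
  have hfull : univ.filter (x · ≠ mask) = univ := eq_univ_of_card _ (by simpa using hcard)
  rw [eq_univ_iff_forall] at hfull
  exact funext fun i => hagree i (mem_filter.1 (hfull i)).2

theorem sum_refDist_succ_mul (k : ℕ) (f : (Fin L → V) → ℝ) :
    ∑ w, refDist G mask x0 (k + 1) w * f w
      = ∑ x, refDist G mask x0 k x *
          ∑ i with x i = mask, G x0 x i * f (Function.update x i (x0 i)) := by
  simp only [refDist, sum_mul, mul_sum]
  rw [sum_comm]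
  refine sum_congr rfl fun x _ => ?_
  rw [sum_comm' (t' := univ.filter (x · = mask))
    (s' := fun i => {Function.update x i (x0 i)}) (by simp [and_comm, eq_comm])]
  simp [mul_assoc]

theorem reachProb_pos (hD0 : ∀ x i y, 0 ≤ D x i y) (hD1 : ∀ x i, ∑ y, D x i y = 1)
    (hG0 : ∀ z x i, 0 ≤ G z x i) (hG1 : ∀ z x, (∃ i, x i = mask) → ∑ i, G z x i = 1)
    (hGsupp : ∀ z x i, x i ≠ mask → G z x i = 0) (hx0 : ∀ i, x0 i ≠ mask)
    (hpos : ∀ k, k < L → ∀ x : Fin L → V, 0 < refDist G mask x0 k x →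
      ∀ i, x i = mask → 0 < G x0 x i →
        0 < D x i (x0 i) ∧ 0 < Fplan D G x (x0 i) i) :
    ∀ n k, k + n = L → ∀ x, 0 < refDist G mask x0 k x → 0 < reachProb D G x0 n x
  | 0, k, hk, x, hx => by
    obtain rfl : k = L := hk
    simp [reachProb, eq_of_refDist_pos hG0 hx0 hx]
  | n + 1, k, hk, x, hx => by
    have hk : k < L := by omega
    have hsum :=
      sum_masked_planner_eq_one hG1 hGsupp x0 (exists_mask_of_refDist_pos hG0 hx0 hk hx)
    obtain ⟨i, hi, hGi⟩ := (sum_pos_iff_of_nonneg fun i _ => hG0 x0 x i).1 (hsum ▸ one_pos)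
    have hxi : x i = mask := (mem_filter.1 hi).2
    obtain ⟨hD, hF⟩ := hpos k hk x hx i hxi hGi
    have hnext := reachProb_pos hD0 hD1 hG0 hG1 hGsupp hx0 hpos n (k + 1) (by omega) _
      ((refDist_succ_pos_iff hG0).2 ⟨x, i, hx, hxi, hGi, rfl⟩)
    calc 0 < D x i (x0 i) * Fplan D G x (x0 i) i *
          reachProb D G x0 n (Function.update x i (x0 i)) := by positivity
      _ ≤ stepKernel D G x (Function.update x i (x0 i)) *
          reachProb D G x0 n (Function.update x i (x0 i)) :=
        mul_le_mul_of_nonneg_right (mul_Fplan_le_stepKernel hD0 hD1 hG0 x i (x0 i)) hnext.le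
      _ ≤ reachProb D G x0 (n + 1) x := stepKernel_mul_le_reachProb_succ hD0 hG0 n x _

theorem elboIntegrand_add_le (hD0 : ∀ x i y, 0 ≤ D x i y) (hD1 : ∀ x i, ∑ y, D x i y = 1)
    (hG0 : ∀ z x i, 0 ≤ G z x i) (hx0 : ∀ i, x0 i ≠ mask) {n : ℕ} {x : Fin L → V}
    (hsum : ∑ i with x i = mask, G x0 x i = 1)
    (hpos : ∀ i, x i = mask → 0 < G x0 x i → 0 < D x i (x0 i) ∧ 0 < Fplan D G x (x0 i) i ∧
      0 < reachProb D G x0 n (Function.update x i (x0 i))) :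
    elboIntegrand D G mask x0 x +
        ∑ i with x i = mask, G x0 x i * Real.log (reachProb D G x0 n (Function.update x i (x0 i)))
      ≤ Real.log (reachProb D G x0 (n + 1) x) := by
  rw [elboIntegrand, ← sum_add_distrib]
  calc _ = ∑ i with x i = mask, G x0 x i * Real.log (D x i (x0 i) * Fplan D G x (x0 i) i *
          reachProb D G x0 n (Function.update x i (x0 i)) / G x0 x i) := by
        refine sum_congr rfl fun i hi => ?_
        rcases (hG0 x0 x i).eq_or_lt with hGi | hGi
        · simp [← hGi]
        obtain ⟨hD, hF, hr⟩ := hpos i (mem_filter.1 hi).2 hGi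
        rw [Real.log_div (by positivity) hGi.ne', Real.log_mul (by positivity) hr.ne',
          Real.log_mul hD.ne' hF.ne', Real.log_div hGi.ne' hF.ne']
        ring
    _ ≤ _ := Real.sum_mul_log_div_le_log (fun i _ => hG0 x0 x i) hsum
        (fun i _ => mul_nonneg (mul_nonneg (hD0 _ _ _) (Fplan_nonneg hD0 hG0 _ _ _))
          (reachProb_nonneg hD0 hG0 _ _))
        (fun i hi hGi => by obtain ⟨hD, hF, hr⟩ := hpos i (mem_filter.1 hi).2 hGi; positivity)
        (sum_masked_le_reachProb_succ hD0 hD1 hG0 hx0 n x)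

theorem sum_Ico_elboIntegrand_le (hD0 : ∀ x i y, 0 ≤ D x i y)
    (hD1 : ∀ x i, ∑ y, D x i y = 1) (hG0 : ∀ z x i, 0 ≤ G z x i)
    (hG1 : ∀ z x, (∃ i, x i = mask) → ∑ i, G z x i = 1)
    (hGsupp : ∀ z x i, x i ≠ mask → G z x i = 0) (hx0 : ∀ i, x0 i ≠ mask)
    (hpos : ∀ k, k < L → ∀ x : Fin L → V, 0 < refDist G mask x0 k x →
      ∀ i, x i = mask → 0 < G x0 x i →
        0 < D x i (x0 i) ∧ 0 < Fplan D G x (x0 i) i) :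
    ∀ n k, k + n = L →
      ∑ j ∈ Ico k L, ∑ x, refDist G mask x0 j x * elboIntegrand D G mask x0 x
        ≤ ∑ x, refDist G mask x0 k x * Real.log (reachProb D G x0 n x)
  | 0, k, hk => by
    obtain rfl : k = L := hk
    rw [Ico_self, sum_empty]
    refine (sum_eq_zero fun x _ => ?_).ge
    by_cases hx : x = x0 <;> simp [reachProb, hx]
  | n + 1, k, hk => by
    have hk : k < L := by omega
    rw [sum_eq_sum_Ico_succ_bot hk]
    calc _ ≤ ∑ x, refDist G mask x0 k x * elboIntegrand D G mask x0 x +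
          ∑ x, refDist G mask x0 (k + 1) x * Real.log (reachProb D G x0 n x) :=
        add_le_add_right (sum_Ico_elboIntegrand_le hD0 hD1 hG0 hG1 hGsupp hx0 hpos n (k + 1)
          (by omega)) _
      _ = ∑ x, refDist G mask x0 k x * (elboIntegrand D G mask x0 x + ∑ i with x i = mask,
          G x0 x i * Real.log (reachProb D G x0 n (Function.update x i (x0 i)))) := by
        rw [sum_refDist_succ_mul, ← sum_add_distrib]
        simp only [mul_add]
      _ ≤ _ := sum_le_sum fun x _ => by
        rcases (refDist_nonneg (mask := mask) (x0 := x0) hG0 k x).eq_or_lt with hx | hx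
        · simp [← hx]
        refine mul_le_mul_of_nonneg_left (elboIntegrand_add_le hD0 hD1 hG0 hx0 ?_ ?_) hx.le
        · exact sum_masked_planner_eq_one hG1 hGsupp x0 (exists_mask_of_refDist_pos hG0 hx0 hk hx)
        · intro i hxi hGi
          obtain ⟨hD, hF⟩ := hpos k hk x hx i hxi hGi
          exact ⟨hD, hF, reachProb_pos hD0 hD1 hG0 hG1 hGsupp hx0 hpos n (k + 1) (by omega) _
            ((refDist_succ_pos_iff hG0).2 ⟨x, i, hx, hxi, hGi, rfl⟩)⟩

end Planner

/-- **Planner-aware evidence lower bound (P-ELBO).**  For any planner `G`,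
`log p^G(x₀) ≥ 𝓔₁(x₀) + 𝓔₂(x₀)`, where
`𝓔₁(x₀) = L·E_{k ~ Unif{0,…,L-1}} E_{x_k ~ r^G_k}[Σ_{i : x_k^i = m} Cat(i;G(x₀,x_k)) log Cat(x₀^i; D^i(x_k))]`
and
`𝓔₂(x₀) = −L·E_{k ~ Unif{0,…,L-1}} E_{x_k ~ r^G_k}[Σ_{i : x_k^i = m} Cat(i;G(x₀,x_k)) log(Cat(i;G(x₀,x_k)) / F(x_k, x₀^i, i))]`.
The positivity hypothesis `hpos` ensures that no `−∞` terms occur, so that the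
extended-real inequality can be stated over `ℝ`. -/
theorem planner_aware_elbo
    {V : Type*} [Fintype V] [DecidableEq V] {L : ℕ}
    (mask : V)
    (D : (Fin L → V) → Fin L → V → ℝ)
    (G : (Fin L → V) → (Fin L → V) → Fin L → ℝ)
    (hD0 : ∀ x i y, 0 ≤ D x i y) (hD1 : ∀ x i, ∑ y, D x i y = 1)
    (hG0 : ∀ z x i, 0 ≤ G z x i)
    (hG1 : ∀ z x, (∃ i, x i = mask) → ∑ i, G z x i = 1)
    (hGsupp : ∀ z x i, x i ≠ mask → G z x i = 0)
    (x0 : Fin L → V) (hx0 : ∀ i, x0 i ≠ mask)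
    (hpos : ∀ k, k < L → ∀ x : Fin L → V, 0 < refDist G mask x0 k x →
      ∀ i, x i = mask → 0 < G x0 x i →
        0 < D x i (x0 i) ∧ 0 < Fplan D G x (x0 i) i) :
    Real.log (sampleDist D G mask L x0)
      ≥ (L : ℝ) * ((L : ℝ)⁻¹ * ∑ k ∈ Finset.range L, ∑ x : Fin L → V,
          refDist G mask x0 k x *
            ∑ i ∈ Finset.univ.filter (fun i : Fin L => x i = mask),
              G x0 x i * Real.log (D x i (x0 i)))
        + -((L : ℝ) * ((L : ℝ)⁻¹ * ∑ k ∈ Finset.range L, ∑ x : Fin L → V,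
            refDist G mask x0 k x *
              ∑ i ∈ Finset.univ.filter (fun i : Fin L => x i = mask),
                G x0 x i * Real.log (G x0 x i / Fplan D G x (x0 i) i))) := by
  have helbo := sum_Ico_elboIntegrand_le hD0 hD1 hG0 hG1 hGsupp hx0 hpos L 0 (zero_add L)
  rw [← range_eq_Ico] at helbo
  rw [natCast_mul_inv_mul_sum_range, natCast_mul_inv_mul_sum_range, ← sub_eq_add_neg,
    sampleDist_eq_reachProb]
  convert helbo using 1
  · simp [refDist]
  · simp only [elboIntegrand, mul_sub, sum_sub_distrib]
end

section
/- P2 one-step transition probabilities: let V and D be as below and let G_2 = {G^k_2}_{k=1}^L be a P2-style planner, where G^k_2(z, x) is a probability distribution over k-element subsets of {1,...,L}. In P2 planner-guided sampling, if the state after step k is x_k (which has exactly k unmasked coordinates), then for any y ∈ V^L with exactly k+1 unmasked coordinates the one-step transition probability from x_k to y equals ( Π_{i ∈ C(y)} Cat( y^i; D^i(x_k) ) ) · F^{k+1}(x_k, y), where C(y) = { i : y^i ≠ m } and F^{k+1}(x, y) = E_{z ~ D(x)}[ Cat( C(y); G^{k+1}_2(z^{-y}, x) ) ], with z^{-y}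 denoting z with z^i replaced by y^i for every i ∈ C(y). -/
/-! A planner only proposes `(k+1)`-subsets, and a subset `S` can unmask `z` to `y` only if
`C(y) ⊆ S`; so `S = C(y)`, and the transition probability is the expectation of
`G^{k+1}(z, x)(C(y))` over the `z ~ D(x)` that agree with `y` on `C(y)`. Under the product law
the event `z = y on C(y)` has probability `∏_{i ∈ C(y)} D^i(x)(y^i)` and is independent of
`z^{-y}`, which only sees the coordinates of `z` off `C(y)`; on that event `z = z^{-y}`. -/

open Finset

/-- `C(y)`: the set of unmasked coordinates of `y`. -/
def unmaskedSet {V : Type*} [Fintype V] [DecidableEq V] {L : ℕ}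
    (mask : V) (y : Fin L → V) : Finset (Fin L) :=
  Finset.univ.filter (fun i : Fin L => y i ≠ mask)

/-- The sequence keeping the coordinates of `z` on `S` and masking all others. -/
def maskedWith {V : Type*} {L : ℕ} [DecidableEq (Fin L)]
    (mask : V) (z : Fin L → V) (S : Finset (Fin L)) : Fin L → V :=
  fun i => if i ∈ S then z i else mask

/-- `z^{-y}`: the sequence `z` with `z^i` replaced by `y^i` for every `i ∈ C(y)`. -/
def mergeOn {V : Type*} [DecidableEq V] {L : ℕ}
    (mask : V) (z y : Fin L → V) : Fin L → V :=
  fun i => if y i ≠ mask then y i else z i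

/-- `F^{k}(x, y) = E_{z ~ D(x)}[ Cat(C(y); G₂^{k}(z^{-y}, x)) ]`, the coordinates of
`z` being sampled independently, `z^j ~ D^j(x)`. -/
noncomputable def FP2 {V : Type*} [Fintype V] [DecidableEq V] {L : ℕ}
    (D : (Fin L → V) → Fin L → V → ℝ)
    (G2 : ℕ → (Fin L → V) → (Fin L → V) → Finset (Fin L) → ℝ)
    (mask : V) (k : ℕ) (x y : Fin L → V) : ℝ :=
  ∑ z : Fin L → V, (∏ j, D x j (z j)) * G2 k (mergeOn mask z y) x (unmaskedSet mask y)

/-- One step of P2 planner-guided sampling after step `k`: from state `x`, sample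
`z ~ D(x)` coordinatewise independently, sample a `(k+1)`-element subset
`I ~ G₂^{k+1}(z, x)`, and move to the state whose coordinates on `I` are those of `z`
and which is masked elsewhere.  `p2Kernel D G2 mask k x w` is the probability of
moving from `x` to `w`. -/
noncomputable def p2Kernel {V : Type*} [Fintype V] [DecidableEq V] {L : ℕ}
    (D : (Fin L → V) → Fin L → V → ℝ)
    (G2 : ℕ → (Fin L → V) → (Fin L → V) → Finset (Fin L) → ℝ)
    (mask : V) (k : ℕ) (x w : Fin L → V) : ℝ :=
  ∑ z : Fin L → V, (∏ j, D x j (z j)) *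
    ∑ S ∈ Finset.univ.filter (fun S : Finset (Fin L) => maskedWith mask z S = w),
      G2 (k + 1) z x S

section ProductSums

variable {ι α R : Type*} [Fintype ι] [DecidableEq ι] [CommSemiring R]

theorem sum_prod_mul_comp_coordwise {β : Type*} [Fintype α] [Fintype β] [DecidableEq β]
    (p : ι → α → R) (φ : ι → α → β) (h : (ι → β) → R) :
    ∑ z : ι → α, (∏ i, p i (z i)) * h (fun i => φ i (z i)) =
      ∑ w : ι → β, (∏ i, ∑ a with φ i a = w i, p i a) * h w := by
  calc ∑ z : ι → α, (∏ i, p i (z i)) * h (fun i => φ i (z i))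
      = ∑ z : ι → α, ∑ w : ι → β,
          (if (fun i => φ i (z i)) = w then ∏ i, p i (z i) else 0) * h w := by
        simp only [ite_mul, zero_mul, sum_ite_eq, mem_univ, if_true]
    _ = ∑ w : ι → β, (∏ i, ∑ a with φ i a = w i, p i a) * h w := by
        rw [sum_comm]
        refine sum_congr rfl fun w _ => ?_
        simp only [sum_filter, Fintype.prod_sum, prod_ite_zero, mem_univ, forall_const,
          funext_iff, sum_mul]

theorem prod_mul_prod_ite_eq_ite [DecidableEq α] (p : ι → α → R) (s : Finset ι) (y w : ι → α) :
    (∏ i ∈ s, p i (y i)) * ∏ i, (if i ∈ s then (if y i = w i then 1 else 0) else p i (w i)) =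
      if ∀ i ∈ s, w i = y i then ∏ i, p i (w i) else 0 := by
  have hs : ∏ i ∈ s, p i (y i) = ∏ i, if i ∈ s then p i (y i) else 1 := by
    rw [prod_ite_mem, univ_inter]
  have hfactor : ∀ i, (if i ∈ s then p i (y i) else 1) *
      (if i ∈ s then (if y i = w i then 1 else 0) else p i (w i)) =
        if i ∈ s → w i = y i then p i (w i) else 0 := by
    intro i
    by_cases hi : i ∈ s <;> by_cases hw : w i = y i <;> simp [hi, hw, Ne.symm]
  simp only [hs, ← prod_mul_distrib, hfactor, prod_ite_zero, mem_univ, true_implies]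

theorem prod_mul_sum_prod_mul_piecewise [Fintype α] [DecidableEq α] (p : ι → α → R) (s : Finset ι)
    (hp : ∀ i ∈ s, ∑ a, p i a = 1) (y : ι → α) (h : (ι → α) → R) :
    (∏ i ∈ s, p i (y i)) * ∑ z : ι → α, (∏ i, p i (z i)) * h (s.piecewise y z) =
      ∑ z : ι → α, (∏ i, p i (z i)) * if ∀ i ∈ s, z i = y i then h z else 0 := by
  have hfiber : ∀ i b, ∑ a with s.piecewise y (fun _ => a) i = b, p i a =
      if i ∈ s then (if y i = b then 1 else 0) else p i b := by
    intro i b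
    by_cases hi : i ∈ s
    · simp only [piecewise_eq_of_mem _ _ _ hi, hi, if_true]
      split_ifs with hyb
      · simp [hyb, hp i hi]
      · simp [hyb]
    · simp [hi, filter_eq']
  -- `s.piecewise y z` is, definitionally, the coordinatewise map `zᵢ ↦ s.piecewise y (fun _ ↦ zᵢ) i`
  rw [show ∑ z : ι → α, (∏ i, p i (z i)) * h (s.piecewise y z) = _ from
    sum_prod_mul_comp_coordwise p (fun i a => s.piecewise y (fun _ => a) i) h, mul_sum]
  simp only [hfiber, ← mul_assoc, prod_mul_prod_ite_eq_ite, ite_mul, zero_mul, mul_ite, mul_zero]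

end ProductSums

section Masking

variable {V : Type*} [Fintype V] [DecidableEq V] {L : ℕ} (mask : V)

theorem mem_unmaskedSet {y : Fin L → V} {i : Fin L} : i ∈ unmaskedSet mask y ↔ y i ≠ mask := by
  simp [unmaskedSet]

theorem mergeOn_eq_piecewise (z y : Fin L → V) :
    mergeOn mask z y = (unmaskedSet mask y).piecewise y z := by
  funext i
  simp only [mergeOn, Finset.piecewise, mem_unmaskedSet]

theorem unmaskedSet_subset_of_maskedWith_eq {z y : Fin L → V} {S : Finset (Fin L)}
    (h : maskedWith mask z S = y) : unmaskedSet mask y ⊆ S := by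
  intro i hi
  by_contra hiS
  have hyi := congrFun h i
  simp only [maskedWith, hiS, if_false] at hyi
  exact (mem_unmaskedSet mask).1 hi hyi.symm

theorem maskedWith_unmaskedSet_eq_iff {z y : Fin L → V} :
    maskedWith mask z (unmaskedSet mask y) = y ↔ ∀ i ∈ unmaskedSet mask y, z i = y i := by
  refine funext_iff.trans (forall_congr' fun i => ?_)
  by_cases hi : i ∈ unmaskedSet mask y
  · simp [maskedWith, hi]
  · have hyi : y i = mask := by simpa [mem_unmaskedSet] using hi
    simp [maskedWith, hi, hyi]

theorem sum_maskedWith_eq {M : Type*} [AddCommMonoid M] (G : Finset (Fin L) → M)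
    {y : Fin L → V} (hG : ∀ S, G S ≠ 0 → S.card = (unmaskedSet mask y).card) (z : Fin L → V) :
    ∑ S with maskedWith mask z S = y, G S =
      if ∀ i ∈ unmaskedSet mask y, z i = y i then G (unmaskedSet mask y) else 0 := by
  have honly : ∀ S, maskedWith mask z S = y → G S ≠ 0 → S = unmaskedSet mask y :=
    fun S hS hGS => (eq_of_subset_of_card_le (unmaskedSet_subset_of_maskedWith_eq mask hS)
      (hG S hGS).le).symm
  calc ∑ S with maskedWith mask z S = y, G S
      = ∑ S with maskedWith mask z S = y, if S = unmaskedSet mask y then G S else 0 :=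
        sum_congr rfl fun S hS => by
          by_cases hGS : G S = 0
          · simp [hGS]
          · simp [honly S (mem_filter.1 hS).2 hGS]
    _ = _ := by simp [sum_ite_eq', maskedWith_unmaskedSet_eq_iff]

end Masking

theorem p2_one_step_transition_general
    {V : Type*} [Fintype V] [DecidableEq V] {L : ℕ}
    (mask : V)
    (D : (Fin L → V) → Fin L → V → ℝ)
    (hD1 : ∀ x i, ∑ y, D x i y = 1)
    (G2 : ℕ → (Fin L → V) → (Fin L → V) → Finset (Fin L) → ℝ)
    (hG2card : ∀ k z x S, G2 k z x S ≠ 0 → S.card = k)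
    (k : ℕ)
    (x : Fin L → V)
    (y : Fin L → V) (hy : (unmaskedSet mask y).card = k + 1) :
    p2Kernel D G2 mask k x y
      = (∏ i ∈ unmaskedSet mask y, D x i (y i)) * FP2 D G2 mask (k + 1) x y := by
  have hsupp : ∀ z S, G2 (k + 1) z x S ≠ 0 → S.card = (unmaskedSet mask y).card :=
    fun z S hS => hy ▸ hG2card _ z x S hS
  simp only [p2Kernel, FP2, sum_maskedWith_eq mask _ (hsupp _), mergeOn_eq_piecewise]
  rw [prod_mul_sum_prod_mul_piecewise (D x) _ (fun i _ => hD1 x i) y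
    (fun w => G2 (k + 1) w x (unmaskedSet mask y))]
  -- the two sides decide `∀ i ∈ C(y), z i = y i` through different `Decidable` instances
  congr!

/-- **P2 one-step transition probabilities.**  Let `G₂ = {G₂^k}` be a P2-style planner
(`G₂^k(z,x)` a probability distribution over `k`-element subsets of positions).  If
the state `x` after step `k` has exactly `k` unmasked coordinates, then for any `y`
with exactly `k+1` unmasked coordinates, the one-step transition probability from `x`
to `y` equals `(Π_{i ∈ C(y)} Cat(y^i; D^i(x))) · F^{k+1}(x, y)`. -/
theorem p2_one_step_transition
    {V : Type*} [Fintype V] [DecidableEq V] {L : ℕ}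
    (mask : V)
    (D : (Fin L → V) → Fin L → V → ℝ)
    (hD0 : ∀ x i y, 0 ≤ D x i y) (hD1 : ∀ x i, ∑ y, D x i y = 1)
    (G2 : ℕ → (Fin L → V) → (Fin L → V) → Finset (Fin L) → ℝ)
    (hG20 : ∀ k z x S, 0 ≤ G2 k z x S)
    (hG2card : ∀ k z x S, G2 k z x S ≠ 0 → S.card = k)
    (hG2sum : ∀ k z x, 1 ≤ k → k ≤ L → ∑ S : Finset (Fin L), G2 k z x S = 1)
    (k : ℕ) (hk : k < L)
    (x : Fin L → V) (hx : (unmaskedSet mask x).card = k)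
    (y : Fin L → V) (hy : (unmaskedSet mask y).card = k + 1) :
    p2Kernel D G2 mask k x y
      = (∏ i ∈ unmaskedSet mask y, D x i (y i)) * FP2 D G2 mask (k + 1) x y :=
  p2_one_step_transition_general mask D hD1 G2 hG2card k x y hy
end

section
/- Monotonicity of softmax-weighted averages in temperature: let M be a nonempty finite index set, let ℓ^i ∈ ℝ for i ∈ M, and for τ > 0 define weights w^i_τ = exp(ℓ^i / τ) / Σ_{j ∈ M} exp(ℓ^j / τ) and F(τ) = Σ_{i ∈ M} w^i_τ ℓ^i. Then F is nonincreasing in τ (indeed F'(τ) = (F(τ)² − Σ_{i ∈ M} w^i_τ (ℓ^i)²)/τ² ≤ 0), lim_{τ → ∞} w^i_τ = 1/|M| for every i, and consequently for all τ_1 > τ_2 > 0: (1/|M|) Σ_{i ∈ M} ℓ^i ≤ F(τ_1) ≤ F(τ_2). -/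
/-!
Differentiating the quotient `F τ = (∑ e^{ℓ_j/τ} ℓ_j) / ∑ e^{ℓ_j/τ}` gives
`F' τ = -Var_w(ℓ) / τ²`, where `Var_w` is the variance under the softmax weights; it is
nonpositive by Jensen's inequality for `x ↦ x²`, so `F` is antitone on `(0, ∞)`. As `τ → ∞`
every `e^{ℓ_j/τ} → 1`, so the weights become uniform and `F` decreases to the plain average
of `ℓ`, which is therefore a lower bound.
-/

open Finset Filter Real Topology

section Softmax

variable {ι : Type*} [Fintype ι]

noncomputable def softmaxWeight (ℓ : ι → ℝ) (τ : ℝ) (i : ι) : ℝ :=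
  exp (ℓ i / τ) / ∑ j, exp (ℓ j / τ)

noncomputable def softmaxMean (ℓ f : ι → ℝ) (τ : ℝ) : ℝ :=
  ∑ i, softmaxWeight ℓ τ i * f i

section Weights

variable (ℓ : ι → ℝ) (τ : ℝ)

lemma sum_exp_div_pos [Nonempty ι] : 0 < ∑ j, exp (ℓ j / τ) :=
  sum_pos (fun _ _ => exp_pos _) univ_nonempty

lemma softmaxWeight_pos [Nonempty ι] (i : ι) : 0 < softmaxWeight ℓ τ i :=
  div_pos (exp_pos _) (sum_exp_div_pos ℓ τ)

lemma sum_softmaxWeight [Nonempty ι] : ∑ i, softmaxWeight ℓ τ i = 1 := by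
  simp only [softmaxWeight]
  rw [← sum_div, div_self (sum_exp_div_pos ℓ τ).ne']

lemma softmaxMean_eq_div (f : ι → ℝ) :
    softmaxMean ℓ f τ = (∑ j, exp (ℓ j / τ) * f j) / ∑ j, exp (ℓ j / τ) := by
  simp only [softmaxMean, softmaxWeight, sum_div, div_mul_eq_mul_div]

lemma sq_softmaxMean_le [Nonempty ι] (f : ι → ℝ) :
    softmaxMean ℓ f τ ^ 2 ≤ softmaxMean ℓ (fun i => f i ^ 2) τ := by
  simpa [softmaxMean, smul_eq_mul] using
    (Even.convexOn_pow even_two).map_sum_le (t := univ) (p := f)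
      (fun i _ => (softmaxWeight_pos ℓ τ i).le) (sum_softmaxWeight ℓ τ)
      (fun i _ => Set.mem_univ (f i))

end Weights

section Derivative

variable (ℓ : ι → ℝ) {τ : ℝ}

lemma hasDerivAt_sum_exp_div_mul (g : ι → ℝ) (hτ : τ ≠ 0) :
    HasDerivAt (fun t => ∑ j, exp (ℓ j / t) * g j)
      (-(∑ j, exp (ℓ j / τ) * (ℓ j * g j)) / τ ^ 2) τ := by
  have hexp (j : ι) : HasDerivAt (fun t => exp (ℓ j / t)) (exp (ℓ j / τ) * (-ℓ j / τ ^ 2)) τ := by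
    simpa [div_eq_mul_inv, neg_div] using (((hasDerivAt_inv hτ).const_mul (ℓ j)).exp)
  refine (HasDerivAt.fun_sum (u := univ) fun j _ => (hexp j).mul_const (g j)).congr_deriv ?_
  rw [neg_div, sum_div, ← sum_neg_distrib]
  exact sum_congr rfl fun j _ => by ring

lemma hasDerivAt_softmaxMean [Nonempty ι] (f : ι → ℝ) (hτ : τ ≠ 0) :
    HasDerivAt (softmaxMean ℓ f)
      ((softmaxMean ℓ ℓ τ * softmaxMean ℓ f τ - softmaxMean ℓ (fun i => ℓ i * f i) τ) / τ ^ 2)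
      τ := by
  have hZ := hasDerivAt_sum_exp_div_mul ℓ (fun _ => 1) hτ
  simp only [mul_one] at hZ
  have hquot := (hasDerivAt_sum_exp_div_mul ℓ f hτ).div hZ (sum_exp_div_pos ℓ τ).ne'
  rw [funext fun t => softmaxMean_eq_div ℓ t f]
  refine hquot.congr_deriv ?_
  simp only [softmaxMean_eq_div]
  have := (sum_exp_div_pos ℓ τ).ne'
  field_simp
  ring

lemma hasDerivAt_softmaxMean_self [Nonempty ι] (hτ : τ ≠ 0) :
    HasDerivAt (softmaxMean ℓ ℓ)
      ((softmaxMean ℓ ℓ τ ^ 2 - softmaxMean ℓ (fun i => ℓ i ^ 2) τ) / τ ^ 2) τ := by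
  simpa only [← sq] using hasDerivAt_softmaxMean ℓ ℓ hτ

lemma softmaxMean_self_deriv_nonpos [Nonempty ι] (τ : ℝ) :
    (softmaxMean ℓ ℓ τ ^ 2 - softmaxMean ℓ (fun i => ℓ i ^ 2) τ) / τ ^ 2 ≤ 0 :=
  div_nonpos_of_nonpos_of_nonneg (sub_nonpos.2 (sq_softmaxMean_le ℓ τ ℓ)) (sq_nonneg τ)

lemma antitoneOn_softmaxMean_self [Nonempty ι] : AntitoneOn (softmaxMean ℓ ℓ) (Set.Ioi 0) := by
  have hderiv (τ : ℝ) (hτ : τ ∈ Set.Ioi 0) := hasDerivAt_softmaxMean_self ℓ (ne_of_gt hτ)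
  refine antitoneOn_of_hasDerivWithinAt_nonpos (convex_Ioi 0)
    (fun τ hτ => (hderiv τ hτ).continuousAt.continuousWithinAt) (fun τ hτ => ?_)
    (fun τ _ => softmaxMean_self_deriv_nonpos ℓ τ)
  rw [interior_Ioi] at hτ ⊢
  exact (hderiv τ hτ).hasDerivWithinAt

end Derivative

section HighTemperature

variable (ℓ : ι → ℝ)

lemma tendsto_softmaxWeight_atTop (i : ι) :
    Tendsto (fun τ => softmaxWeight ℓ τ i) atTop (𝓝 (Fintype.card ι : ℝ)⁻¹) := by
  have hexp (j : ι) : Tendsto (fun τ => exp (ℓ j / τ)) atTop (𝓝 1) := by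
    simpa [Function.comp_def] using
      (continuous_exp.tendsto 0).comp (tendsto_const_nhds.div_atTop tendsto_id)
  have hZ : Tendsto (fun τ => ∑ j, exp (ℓ j / τ)) atTop (𝓝 (Fintype.card ι : ℝ)) := by
    simpa using tendsto_finsetSum univ fun j _ => hexp j
  have hcard : (Fintype.card ι : ℝ) ≠ 0 := by
    have : Nonempty ι := ⟨i⟩
    exact_mod_cast Fintype.card_ne_zero
  have := (hexp i).div hZ hcard
  rw [one_div] at this
  exact this

lemma tendsto_softmaxMean_atTop (f : ι → ℝ) :
    Tendsto (softmaxMean ℓ f) atTop (𝓝 ((Fintype.card ι : ℝ)⁻¹ * ∑ i, f i)) := by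
  rw [mul_sum]
  exact tendsto_finsetSum _ fun i _ => (tendsto_softmaxWeight_atTop ℓ i).mul_const (f i)

lemma average_le_softmaxMean_self [Nonempty ι] {τ : ℝ} (hτ : 0 < τ) :
    (Fintype.card ι : ℝ)⁻¹ * ∑ i, ℓ i ≤ softmaxMean ℓ ℓ τ := by
  refine le_of_tendsto (tendsto_softmaxMean_atTop ℓ ℓ) ?_
  filter_upwards [eventually_ge_atTop τ] with t ht
  exact antitoneOn_softmaxMean_self ℓ hτ (hτ.trans_le ht) ht

end HighTemperature

end Softmax

/-- **Monotonicity of softmax-weighted averages in temperature.**  For a nonempty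
finite index set `M`, scores `ℓ : M → ℝ`, softmax weights
`w τ i = exp(ℓ i / τ) / Σ_j exp(ℓ j / τ)` and `F τ = Σ_i w τ i * ℓ i`:
(1) `F` has derivative `(F τ² − Σ_i w τ i (ℓ i)²)/τ²` at every `τ > 0`, and this
derivative is `≤ 0` (so `F` is nonincreasing on `(0, ∞)`);
(2) `w τ i → 1/|M|` as `τ → ∞`, for every `i`;
(3) for all `τ₁ > τ₂ > 0`, `(1/|M|) Σ_i ℓ i ≤ F τ₁ ≤ F τ₂`. -/
theorem softmax_weighted_average_monotone
    (M : Type*) [Fintype M] [Nonempty M] (ℓ : M → ℝ)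
    (w : ℝ → M → ℝ) (F : ℝ → ℝ)
    (hw : ∀ τ i, w τ i = Real.exp (ℓ i / τ) / ∑ j, Real.exp (ℓ j / τ))
    (hF : ∀ τ, F τ = ∑ i, w τ i * ℓ i) :
    (∀ τ : ℝ, 0 < τ →
      HasDerivAt F ((F τ ^ 2 - ∑ i, w τ i * ℓ i ^ 2) / τ ^ 2) τ ∧
      (F τ ^ 2 - ∑ i, w τ i * ℓ i ^ 2) / τ ^ 2 ≤ 0) ∧
    (∀ i, Tendsto (fun τ => w τ i) atTop (nhds ((Fintype.card M : ℝ)⁻¹))) ∧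
    (∀ τ₁ τ₂ : ℝ, 0 < τ₂ → τ₂ < τ₁ →
      (Fintype.card M : ℝ)⁻¹ * ∑ i, ℓ i ≤ F τ₁ ∧ F τ₁ ≤ F τ₂) := by
  obtain rfl : w = softmaxWeight ℓ := funext fun τ => funext (hw τ)
  obtain rfl : F = softmaxMean ℓ ℓ := funext hF
  refine ⟨fun τ hτ => ⟨hasDerivAt_softmaxMean_self ℓ hτ.ne', softmaxMean_self_deriv_nonpos ℓ τ⟩,
    tendsto_softmaxWeight_atTop ℓ, fun τ₁ τ₂ hτ₂ hlt =>
      ⟨average_le_softmaxMean_self ℓ (hτ₂.trans hlt),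
        antitoneOn_softmaxMean_self ℓ hτ₂ (hτ₂.trans hlt) hlt.le⟩⟩
end
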